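/- arXiv:1905.06481 — 5 statements merged into one kernel-verified Lean document; each statement's English description precedes it below -/
import Mathlib

section
/- Let A ∈ (−∞, ∞] and let G ∈ C^∞((−A, ∞)) be such that: the limits G(−A⁺), G'(−A⁺), G''(−A⁺) all exist and are strictly positive; G'(−A⁺)² − G(−A⁺)·G''(−A⁺) ≥ 0; G'' is strictly positive and nonincreasing on (−A, ∞); and G'(∞) := lim_{y→∞} G'(y) exists and is strictly positive. Then G ∈ 𝒢_A; in particular G'(y)² − G(y)·G''(y) > 0 for every y ∈ (−A, ∞). -/
open Filter Topology Set MeasureTheory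

/-- The open interval `(−A, ∞) ⊆ ℝ`, for `A ∈ (−∞, ∞]` encoded as `A : EReal`. -/
def Gdom (A : EReal) : Set ℝ := {y : ℝ | -A < (y : EReal)}

/-- The filter of approach `y → −A⁺` inside `ℝ` (which is `atBot` when `A = ∞`). -/
noncomputable def leftFilter (A : EReal) : Filter ℝ :=
  Filter.comap (fun x : ℝ => (x : EReal)) (nhdsWithin (-A) (Set.Ioi (-A)))

/-- Membership in the class `𝒢_A`. -/
structure MemGG (A : EReal) (G : ℝ → ℝ) : Prop where
  smooth : ContDiffOn ℝ (⊤ : ℕ∞) G (Gdom A)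
  lim_zeroth : ∃ L : ℝ, 0 < L ∧ Filter.Tendsto G (leftFilter A) (nhds L)
  lim_first : ∃ L : ℝ, 0 < L ∧ Filter.Tendsto (deriv G) (leftFilter A) (nhds L)
  lim_second : ∃ L : ℝ, 0 < L ∧ Filter.Tendsto (deriv (deriv G)) (leftFilter A) (nhds L)
  second_pos : ∀ y ∈ Gdom A, 0 < deriv (deriv G) y
  key_ineq : ∀ y ∈ Gdom A, 0 < (deriv G y) ^ 2 - G y * deriv (deriv G) y
  lim_atTop : ∃ L : ℝ, 0 < L ∧ Filter.Tendsto (deriv G) Filter.atTop (nhds L)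

lemma gdom_isOpen (A : EReal) : IsOpen (Gdom A) :=
  isOpen_Ioi.preimage continuous_coe_real_ereal

lemma gdom_convex (A : EReal) : Convex ℝ (Gdom A) := by
  intro x hx y hy a b ha hb hab
  have hmin : min x y ∈ Gdom A := by
    rcases min_cases x y with ⟨h, _⟩ | ⟨h, _⟩ <;> simp [Gdom, h] at hx hy ⊢ <;> assumption
  have h1 : a * (min x y) ≤ a * x := mul_le_mul_of_nonneg_left (min_le_left x y) ha
  have h2 : b * (min x y) ≤ b * y := mul_le_mul_of_nonneg_left (min_le_right x y) hb
  have hle : min x y ≤ a • x + b • y := by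
    simp only [smul_eq_mul]
    calc min x y = (a + b) * min x y := by rw [hab, one_mul]
      _ = a * min x y + b * min x y := by ring
      _ ≤ a * x + b * y := add_le_add h1 h2
  show (-A) < ((a • x + b • y : ℝ) : EReal)
  exact lt_of_lt_of_le (show (-A) < ((min x y : ℝ) : EReal) from hmin)
    (EReal.coe_le_coe_iff.mpr hle)

lemma denseRange_real_ereal : DenseRange (fun r : ℝ => (r : EReal)) := by
  apply Dense.mono _ EReal.denseRange_ratCast
  rintro _ ⟨q, rfl⟩
  exact ⟨(q : ℝ), rfl⟩

lemma leftFilter_neBot {A : EReal} (hA : A ≠ ⊥) : (leftFilter A).NeBot := by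
  rw [leftFilter, Filter.comap_neBot_iff]
  intro t ht
  have hAtop : (-A) ≠ ⊤ := by
    simp [EReal.neg_eq_top_iff, hA]
  have hlt : (-A) < ⊤ := lt_top_iff_ne_top.mpr hAtop
  haveI : (𝓝[>] (-A)).NeBot := nhdsGT_neBot_of_exists_gt ⟨⊤, hlt⟩
  obtain ⟨U, hUo, haU, hsub⟩ := mem_nhdsWithin.mp ht
  have hV : U ∩ Ioi (-A) ∈ 𝓝[>] (-A) :=
    Filter.inter_mem (mem_nhdsWithin_of_mem_nhds (hUo.mem_nhds haU)) self_mem_nhdsWithin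
  have hVne : (U ∩ Ioi (-A)).Nonempty := Filter.nonempty_of_mem hV
  obtain ⟨x, hx⟩ := denseRange_real_ereal.exists_mem_open (hUo.inter isOpen_Ioi) hVne
  exact ⟨x, hsub hx⟩

lemma leftFilter_mem (A : EReal) : ∀ᶠ x in leftFilter A, x ∈ Gdom A := by
  have : Ioi (-A) ∈ 𝓝[>] (-A) := self_mem_nhdsWithin
  exact Filter.preimage_mem_comap this

lemma leftFilter_lt {A : EReal} {y : ℝ} (hy : y ∈ Gdom A) :
    ∀ᶠ x in leftFilter A, x < y := by
  have h1 : Iio ((y : EReal)) ∈ 𝓝 (-A) := Iio_mem_nhds hy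
  have h2 : Iio ((y : EReal)) ∈ 𝓝[>] (-A) := nhdsWithin_le_nhds h1
  have h3 : (fun x : ℝ => (x : EReal)) ⁻¹' (Iio ((y : ℝ) : EReal)) ∈ leftFilter A := by
    rw [leftFilter]; exact Filter.preimage_mem_comap h2
  filter_upwards [h3] with x hx
  exact EReal.coe_lt_coe_iff.mp hx

/-- If `f` is strictly monotone on `Gdom A` and tends to `L` at the left end,
then `L < f y` for all `y` in the domain. -/
lemma left_limit_lt {A : EReal} (hA : A ≠ ⊥) {f : ℝ → ℝ} {L : ℝ}
    (hmono : StrictMonoOn f (Gdom A))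
    (hlim : Filter.Tendsto f (leftFilter A) (nhds L)) :
    ∀ y ∈ Gdom A, L < f y := by
  intro y hy
  haveI := leftFilter_neBot hA
  obtain ⟨x, hxD, hxy⟩ := ((leftFilter_mem A).and (leftFilter_lt hy)).exists
  have hLx : L ≤ f x := by
    refine le_of_tendsto hlim ?_
    filter_upwards [leftFilter_mem A, leftFilter_lt hxD] with z hzD hzx
    exact (hmono hzD hxD hzx).le
  exact hLx.trans_lt (hmono hxD hy hxy)

/-- a sufficient criterion for membership in `𝒢_A`: the limits of
`G, G', G''` at `−A⁺` exist and are strictly positive,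
`G'(−A⁺)² − G(−A⁺)·G''(−A⁺) ≥ 0`, `G''` is strictly positive and nonincreasing, and
`G'(∞)` exists and is strictly positive. -/
theorem memGG_criterion (A : EReal) (hA : A ≠ ⊥) (G : ℝ → ℝ)
    (h_smooth : ContDiffOn ℝ (⊤ : ℕ∞) G (Gdom A))
    (L₀ L₁ L₂ : ℝ) (hL₀ : 0 < L₀) (hL₁ : 0 < L₁) (hL₂ : 0 < L₂)
    (h₀ : Filter.Tendsto G (leftFilter A) (nhds L₀))
    (h₁ : Filter.Tendsto (deriv G) (leftFilter A) (nhds L₁))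
    (h₂ : Filter.Tendsto (deriv (deriv G)) (leftFilter A) (nhds L₂))
    (h_key_lim : 0 ≤ L₁ ^ 2 - L₀ * L₂)
    (hG''_pos : ∀ y ∈ Gdom A, 0 < deriv (deriv G) y)
    (hG''_anti : AntitoneOn (deriv (deriv G)) (Gdom A))
    (Linf : ℝ) (hLinf : 0 < Linf)
    (h_top : Filter.Tendsto (deriv G) Filter.atTop (nhds Linf)) :
    MemGG A G ∧ ∀ y ∈ Gdom A, 0 < (deriv G y) ^ 2 - G y * deriv (deriv G) y := by
  set D := Gdom A with hD
  have hDo : IsOpen D := gdom_isOpen A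
  have hDc : Convex ℝ D := gdom_convex A
  have hDint : interior D = D := hDo.interior_eq
  -- smoothness of derivatives
  have hC1 : ContDiffOn ℝ (⊤ : ℕ∞) (deriv G) D :=
    h_smooth.deriv_of_isOpen hDo (by simp)
  have hC2 : ContDiffOn ℝ (⊤ : ℕ∞) (deriv (deriv G)) D :=
    hC1.deriv_of_isOpen hDo (by simp)
  have hG1 : ∀ y ∈ D, HasDerivAt G (deriv G y) y := fun y hy =>
    (((h_smooth.differentiableOn (by simp)) y hy).differentiableAt
      (hDo.mem_nhds hy)).hasDerivAt
  have hG2 : ∀ y ∈ D, HasDerivAt (deriv G) (deriv (deriv G) y) y := fun y hy =>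
    (((hC1.differentiableOn (by simp)) y hy).differentiableAt
      (hDo.mem_nhds hy)).hasDerivAt
  have hG3 : ∀ y ∈ D, HasDerivAt (deriv (deriv G)) (deriv (deriv (deriv G)) y) y :=
    fun y hy =>
    (((hC2.differentiableOn (by simp)) y hy).differentiableAt
      (hDo.mem_nhds hy)).hasDerivAt
  -- third derivative is nonpositive
  have hG3nonpos : ∀ y ∈ D, deriv (deriv (deriv G)) y ≤ 0 := by
    intro y hy
    have hslope := hasDerivAt_iff_tendsto_slope.mp (hG3 y hy)
    refine le_of_tendsto hslope ?_
    have hDmem : {z : ℝ | z ∈ D} ∈ 𝓝[≠] y :=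
      nhdsWithin_le_nhds (hDo.mem_nhds hy)
    filter_upwards [hDmem, self_mem_nhdsWithin] with z hzD hzne
    rcases lt_or_gt_of_ne (hzne : z ≠ y) with h | h
    · have hfz : deriv (deriv G) y ≤ deriv (deriv G) z := hG''_anti hzD hy h.le
      rw [slope_def_field]
      exact div_nonpos_of_nonneg_of_nonpos (by linarith) (by linarith)
    · have hfz : deriv (deriv G) z ≤ deriv (deriv G) y := hG''_anti hy hzD h.le
      rw [slope_def_field]
      exact div_nonpos_of_nonpos_of_nonneg (by linarith) (by linarith)
  -- G' is strictly monotone, hence > L₁ > 0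
  have hG'mono : StrictMonoOn (deriv G) D :=
    strictMonoOn_of_deriv_pos hDc (hC1.continuousOn) (fun x hx =>
      hG''_pos x (hDint ▸ hx))
  have hG'gt : ∀ y ∈ D, L₁ < deriv G y := left_limit_lt hA hG'mono h₁
  have hG'pos : ∀ y ∈ D, 0 < deriv G y := fun y hy => hL₁.trans (hG'gt y hy)
  -- G is strictly monotone, hence > L₀ > 0
  have hGmono : StrictMonoOn G D :=
    strictMonoOn_of_deriv_pos hDc h_smooth.continuousOn (fun x hx => by
      have hx' : x ∈ D := hDint ▸ hx
      exact hG'pos x hx')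
  have hGgt : ∀ y ∈ D, L₀ < G y := left_limit_lt hA hGmono h₀
  have hGpos : ∀ y ∈ D, 0 < G y := fun y hy => hL₀.trans (hGgt y hy)
  -- The function F = (G')² - G·G''
  set F : ℝ → ℝ := fun y => (deriv G y) ^ 2 - G y * deriv (deriv G) y with hF
  have hFd : ∀ y ∈ D, HasDerivAt F
      (2 * deriv G y ^ 1 * deriv (deriv G) y -
        (deriv G y * deriv (deriv G) y + G y * deriv (deriv (deriv G)) y)) y :=
    fun y hy => ((hG2 y hy).pow 2).sub ((hG1 y hy).mul (hG3 y hy))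
  have hFderiv_pos : ∀ x ∈ D, 0 < deriv F x := by
    intro x hx
    rw [(hFd x hx).deriv]
    have h1 := hG'pos x hx
    have h2 := hG''_pos x hx
    have h3 := hG3nonpos x hx
    have h4 := hGpos x hx
    nlinarith
  have hFcont : ContinuousOn F D := fun y hy =>
    ((hFd y hy).continuousAt).continuousWithinAt
  have hFmono : StrictMonoOn F D :=
    strictMonoOn_of_deriv_pos hDc hFcont (fun x hx => hFderiv_pos x (hDint ▸ hx))
  have hFlim : Filter.Tendsto F (leftFilter A) (nhds (L₁ ^ 2 - L₀ * L₂)) :=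
    ((h₁.pow 2).sub (h₀.mul h₂))
  have hkey : ∀ y ∈ D, 0 < (deriv G y) ^ 2 - G y * deriv (deriv G) y := by
    intro y hy
    have := left_limit_lt hA hFmono hFlim y hy
    calc (0 : ℝ) ≤ L₁ ^ 2 - L₀ * L₂ := h_key_lim
      _ < F y := this
  exact ⟨⟨h_smooth, ⟨L₀, hL₀, h₀⟩, ⟨L₁, hL₁, h₁⟩, ⟨L₂, hL₂, h₂⟩,
    hG''_pos, hkey, ⟨Linf, hLinf, h_top⟩⟩, hkey⟩
end

section
/- Let A ∈ ℝ, let ε > 0, and let H ∈ C^∞((−A, ∞)) be strictly positive, nonincreasing, and integrable on (−A, ∞), such that H(−A⁺) := lim_{y→−A⁺} H(y) exists and is finite (hence strictly positive). Define G₁(y) := 1/ε + ∫_{−A}^{y} H(t) dt and G_{ε,H}(y) := 1/(ε²·H(−A⁺)) + ∫_{−A}^{y} G₁(t) dt for y ∈ (−A, ∞). Then G_{ε,H} ∈ 𝒢_A. -/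
open Filter Topology Set MeasureTheory
open scoped NNReal ENNReal

/-- `G₁(y) = 1/ε + ∫_{−A}^y H`. -/
noncomputable def Gone (A ε : ℝ) (H : ℝ → ℝ) : ℝ → ℝ :=
  fun y => 1 / ε + ∫ t in (-A)..y, H t

/-- `G_{ε,H}(y) = 1/(ε²·H(−A⁺)) + ∫_{−A}^y G₁`. -/
noncomputable def GepsH (A ε H₀ : ℝ) (H : ℝ → ℝ) : ℝ → ℝ :=
  fun y => 1 / (ε ^ 2 * H₀) + ∫ t in (-A)..y, Gone A ε H t

/-- the function `G_{ε,H}` built from a strictly positive, nonincreasing,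
integrable smooth `H` on `(−A, ∞)` with finite limit `H(−A⁺)` belongs to `𝒢_A`. -/
theorem GepsH_memGG (A ε : ℝ) (hε : 0 < ε) (H : ℝ → ℝ)
    (hH_smooth : ContDiffOn ℝ (⊤ : ℕ∞) H (Set.Ioi (-A)))
    (hH_pos : ∀ y ∈ Set.Ioi (-A), 0 < H y)
    (hH_anti : AntitoneOn H (Set.Ioi (-A)))
    (hH_int : MeasureTheory.IntegrableOn H (Set.Ioi (-A)))
    (H₀ : ℝ) (hH₀ : Filter.Tendsto H (nhdsWithin (-A) (Set.Ioi (-A))) (nhds H₀)) :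
    MemGG (A : EReal) (GepsH A ε H₀ H) := by
  have hdom : Gdom (A : EReal) = Set.Ioi (-A) := by
    ext y
    show -(A:EReal) < (y:EReal) ↔ y ∈ Set.Ioi (-A)
    simp [Set.mem_Ioi, ← EReal.coe_neg, EReal.coe_lt_coe_iff]
  have hfilt : leftFilter (A : EReal) = nhdsWithin (-A) (Set.Ioi (-A)) := by
    have hpre : (fun x : ℝ => (x : EReal)) ⁻¹' Set.Ioi (((-A : ℝ) : EReal)) = Set.Ioi (-A) := by
      ext y; simp [Set.mem_Ioi, ← EReal.coe_neg, EReal.coe_lt_coe_iff]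
    rw [leftFilter, show -(A:EReal) = ((-A : ℝ) : EReal) by rw [EReal.coe_neg],
      nhdsWithin, nhdsWithin, Filter.comap_inf, Filter.comap_principal, hpre, EReal.nhds_coe,
      Filter.comap_map (fun x y h => by exact_mod_cast h)]
  set g : ℝ → ℝ := Gone A ε H with hg
  set G : ℝ → ℝ := GepsH A ε H₀ H with hG
  set F : ℝ → ℝ := fun x => ∫ t in (-A)..x, H t with hF
  have hgF : ∀ y, g y = 1 / ε + F y := fun y => rfl
  have hIInt : ∀ y : ℝ, -A ≤ y → IntervalIntegrable H volume (-A) y := by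
    intro y hy
    rw [intervalIntegrable_iff_integrableOn_Ioc_of_le hy]
    exact hH_int.mono_set Set.Ioc_subset_Ioi_self
  have hFc : ∀ b : ℝ, ContinuousOn F (Set.Icc (-A) b) := by
    intro b
    have h1 : IntegrableOn H (Set.Icc (-A) b) := by
      rw [integrableOn_Icc_iff_integrableOn_Ioc]
      exact hH_int.mono_set Set.Ioc_subset_Ioi_self
    have h2 := intervalIntegral.continuousOn_primitive (μ := volume) h1
    refine h2.congr fun x hx => ?_
    show (∫ t in (-A)..x, H t) = _
    rw [intervalIntegral.integral_of_le hx.1]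
  have hFd : ∀ y ∈ Set.Ioi (-A), HasDerivAt F (H y) y := by
    intro y hy
    apply intervalIntegral.integral_hasDerivAt_right (hIInt y (le_of_lt hy))
    · exact ⟨Set.Ioi (-A), Ioi_mem_nhds hy,
        hH_smooth.continuousOn.aestronglyMeasurable measurableSet_Ioi⟩
    · exact (hH_smooth.continuousOn y hy).continuousAt (Ioi_mem_nhds hy)
  have hFnn : ∀ y : ℝ, -A ≤ y → 0 ≤ F y := by
    intro y hy
    show (0:ℝ) ≤ ∫ t in (-A)..y, H t
    rw [intervalIntegral.integral_of_le hy]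
    exact setIntegral_nonneg measurableSet_Ioc fun x hx => (hH_pos x hx.1).le
  set M : ℝ := ∫ x in Set.Ioi (-A), H x with hM
  have hM0 : 0 ≤ M :=
    setIntegral_nonneg measurableSet_Ioi fun x hx => (hH_pos x hx).le
  have hFle : ∀ y : ℝ, -A ≤ y → F y ≤ M := by
    intro y hy
    show (∫ t in (-A)..y, H t) ≤ M
    rw [intervalIntegral.integral_of_le hy, hM]
    apply setIntegral_mono_set hH_int
    · rw [Filter.EventuallyLE, ae_restrict_iff' measurableSet_Ioi]
      exact Filter.Eventually.of_forall fun x hx => (hH_pos x hx).le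
    · exact HasSubset.Subset.eventuallyLE Set.Ioc_subset_Ioi_self
  have hFpos : ∀ y ∈ Set.Ioi (-A), 0 < F y := by
    intro y hy
    exact intervalIntegral.intervalIntegral_pos_of_pos_on (hIInt y (le_of_lt hy))
      (fun x hx => hH_pos x hx.1) hy
  have hH₀pos : 0 < H₀ := by
    have hmem : (-A + 1 : ℝ) ∈ Set.Ioi (-A) := by simp
    have hev : ∀ᶠ x in nhdsWithin (-A) (Set.Ioi (-A)), H (-A + 1) ≤ H x := by
      filter_upwards [Ioo_mem_nhdsGT (by linarith : -A < -A + 1)] with x hx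
      exact hH_anti (Set.mem_Ioi.2 hx.1) hmem hx.2.le
    exact lt_of_lt_of_le (hH_pos _ hmem) (ge_of_tendsto hH₀ hev)
  have hHle : ∀ y ∈ Set.Ioi (-A), H y ≤ H₀ := by
    intro y hy
    refine ge_of_tendsto hH₀ ?_
    filter_upwards [Ioo_mem_nhdsGT hy] with x hx
    exact hH_anti (Set.mem_Ioi.2 hx.1) hy hx.2.le
  -- properties of g = G₁
  have hgc : ∀ b : ℝ, ContinuousOn g (Set.Icc (-A) b) := by
    intro b
    have h1 : ContinuousOn (fun y => 1 / ε + F y) (Set.Icc (-A) b) :=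
      continuousOn_const.add (hFc b)
    exact h1.congr fun x _ => hgF x
  have hgd : ∀ y ∈ Set.Ioi (-A), HasDerivAt g (H y) y := by
    intro y hy
    exact (hFd y hy).const_add (1 / ε)
  have hgcontIoi : ContinuousOn g (Set.Ioi (-A)) :=
    fun x hx => ((hgd x hx).continuousAt).continuousWithinAt
  have hglb : ∀ y : ℝ, -A ≤ y → 1/ε ≤ g y := by
    intro y hy; rw [hgF]; linarith [hFnn y hy]
  have hgpos : ∀ y : ℝ, -A ≤ y → 0 < g y :=
    fun y hy => lt_of_lt_of_le (by positivity) (hglb y hy)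
  have hg1 : ∀ y ∈ Set.Ioi (-A), 1/ε < g y := by
    intro y hy; rw [hgF]; linarith [hFpos y hy]
  have hgub : ∀ y : ℝ, -A ≤ y → g y ≤ 1/ε + M := by
    intro y hy; rw [hgF]; linarith [hFle y hy]
  have hgiInt : ∀ y : ℝ, -A ≤ y → IntervalIntegrable g volume (-A) y := by
    intro y hy
    have h2 : ContinuousOn g (Set.uIcc (-A) y) := by rw [Set.uIcc_of_le hy]; exact hgc y
    exact h2.intervalIntegrable
  have hGeq : ∀ y, G y = 1/(ε^2*H₀) + ∫ t in (-A)..y, g t := fun y => rfl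
  have hGd : ∀ y ∈ Set.Ioi (-A), HasDerivAt G (g y) y := by
    intro y hy
    have h := intervalIntegral.integral_hasDerivAt_right (hgiInt y (le_of_lt hy))
      ⟨Set.Ioi (-A), Ioi_mem_nhds hy, hgcontIoi.aestronglyMeasurable measurableSet_Ioi⟩
      ((hgcontIoi y hy).continuousAt (Ioi_mem_nhds hy))
    exact h.const_add _
  have hdG : ∀ y ∈ Set.Ioi (-A), deriv G y = g y := fun y hy => (hGd y hy).deriv
  have hdG2 : ∀ y ∈ Set.Ioi (-A), deriv (deriv G) y = H y := by
    intro y hy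
    have hev : deriv G =ᶠ[𝓝 y] g :=
      Filter.eventually_of_mem (isOpen_Ioi.mem_nhds hy) hdG
    rw [hev.deriv_eq]
    exact (hgd y hy).deriv
  -- analyticity
  have hganal : ContDiffOn ℝ (⊤ : ℕ∞) g (Set.Ioi (-A)) :=
    (contDiffOn_infty_iff_deriv_of_isOpen isOpen_Ioi).2
      ⟨fun x hx => (hgd x hx).differentiableAt.differentiableWithinAt,
        hH_smooth.congr fun x hx => (hgd x hx).deriv⟩
  have hGanal : ContDiffOn ℝ (⊤ : ℕ∞) G (Set.Ioi (-A)) :=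
    (contDiffOn_infty_iff_deriv_of_isOpen isOpen_Ioi).2
      ⟨fun x hx => (hGd x hx).differentiableAt.differentiableWithinAt,
        hganal.congr fun x hx => (hGd x hx).deriv⟩
  -- generic one-sided limit from continuity on `Icc`
  have hlim : ∀ (φ : ℝ → ℝ), ContinuousOn φ (Set.Icc (-A) (-A+1)) →
      Filter.Tendsto φ (nhdsWithin (-A) (Set.Ioi (-A))) (nhds (φ (-A))) := by
    intro φ hφ
    have h1 : ContinuousWithinAt φ (Set.Icc (-A) (-A+1)) (-A) :=
      hφ (-A) ⟨le_refl _, by linarith⟩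
    have h2 := h1.tendsto
    rw [← nhdsWithin_Ioc_eq_nhdsGT (show -A < -A+1 by linarith)]
    exact h2.mono_left (nhdsWithin_mono _ Set.Ioc_subset_Icc_self)
  have hGc : ∀ b : ℝ, ContinuousOn G (Set.Icc (-A) b) := by
    intro b
    have h1 : IntegrableOn g (Set.Icc (-A) b) := by
      rcases le_or_gt (-A) b with hb | hb
      · exact (hgc b).integrableOn_compact isCompact_Icc
      · rw [Set.Icc_eq_empty (by linarith)]; simp
    have h2 := intervalIntegral.continuousOn_primitive (μ := volume) h1
    have h3 : ContinuousOn (fun x => 1/(ε^2*H₀) + ∫ t in Set.Ioc (-A) x, g t)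
        (Set.Icc (-A) b) := continuousOn_const.add h2
    refine h3.congr fun x hx => ?_
    rw [hGeq x, intervalIntegral.integral_of_le hx.1]
  have hGA : G (-A) = 1/(ε^2*H₀) := by
    rw [hGeq, intervalIntegral.integral_same, add_zero]
  have hgA : g (-A) = 1/ε := by
    rw [hgF]
    show 1/ε + ∫ t in (-A)..(-A), H t = 1/ε
    simp
  refine ⟨?_, ?_, ?_, ?_, ?_, ?_, ?_⟩
  · -- smooth
    rw [hdom]
    exact hGanal
  · -- lim_zeroth
    refine ⟨1/(ε^2*H₀), by positivity, ?_⟩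
    rw [hfilt]
    have h1 := hlim G (hGc (-A+1))
    rwa [hGA] at h1
  · -- lim_first
    refine ⟨1/ε, by positivity, ?_⟩
    rw [hfilt]
    have h1 := hlim g (hgc (-A+1))
    rw [hgA] at h1
    refine Filter.Tendsto.congr' ?_ h1
    exact Filter.eventually_of_mem self_mem_nhdsWithin fun y hy => (hdG y hy).symm
  · -- lim_second
    refine ⟨H₀, hH₀pos, ?_⟩
    rw [hfilt]
    refine Filter.Tendsto.congr' ?_ hH₀
    exact Filter.eventually_of_mem self_mem_nhdsWithin fun y hy => (hdG2 y hy).symm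
  · -- second_pos
    rw [hdom]
    intro y hy
    rw [hdG2 y hy]
    exact hH_pos y hy
  · -- key_ineq
    rw [hdom]
    intro y hy
    rw [hdG y hy, hdG2 y hy, hGeq y]
    have hyA : -A < y := hy
    rw [intervalIntegral.integral_of_le hyA.le]
    set P : ℝ := ∫ t in Set.Ioc (-A) y, g t with hP
    have hgio : IntegrableOn g (Set.Ioc (-A) y) :=
      ((hgc y).integrableOn_compact isCompact_Icc).mono_set Set.Ioc_subset_Icc_self
    have hHio : IntegrableOn H (Set.Ioc (-A) y) := hH_int.mono_set Set.Ioc_subset_Ioi_self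
    have hgmeas : AEStronglyMeasurable g (volume.restrict (Set.Ioc (-A) y)) :=
      ((hgc y).mono Set.Ioc_subset_Icc_self).aestronglyMeasurable measurableSet_Ioc
    have hgbdd : ∀ᵐ x ∂(volume.restrict (Set.Ioc (-A) y)), ‖g x‖ ≤ 1/ε + M := by
      rw [ae_restrict_iff' measurableSet_Ioc]
      refine Filter.Eventually.of_forall fun x hx => ?_
      rw [Real.norm_eq_abs, abs_of_pos (hgpos x hx.1.le)]
      exact hgub x hx.1.le
    have hgHio : IntegrableOn (fun t => g t * H t) (Set.Ioc (-A) y) :=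
      hHio.bdd_mul hgmeas hgbdd
    have hFTC : ∫ t in Set.Ioc (-A) y, g t * H t = g y^2/2 - (1/ε)^2/2 := by
      have hderiv : ∀ x ∈ Set.Ioo (-A) y,
          HasDerivWithinAt (fun t => g t^2/2) (g x * H x) (Set.Ioi x) x := by
        intro x hx
        have h1 := ((hgd x hx.1).pow 2).div_const 2
        have h2 : (2:ℕ) * g x ^ (2-1) * H x / 2 = g x * H x := by
          push_cast
          ring
        rw [h2] at h1
        exact h1.hasDerivWithinAt
      have hcont : ContinuousOn (fun t => g t^2/2) (Set.Icc (-A) y) :=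
        ((hgc y).pow 2).div_const 2
      have h3 := intervalIntegral.integral_eq_sub_of_hasDeriv_right_of_le hyA.le hcont hderiv
        (by rw [intervalIntegrable_iff_integrableOn_Ioc_of_le hyA.le]; exact hgHio)
      rw [intervalIntegral.integral_of_le hyA.le] at h3
      rw [h3, hgA]
    have hcomp : P * H y ≤ ∫ t in Set.Ioc (-A) y, g t * H t := by
      have h1 : ∫ t in Set.Ioc (-A) y, g t * H y ≤ ∫ t in Set.Ioc (-A) y, g t * H t := by
        refine setIntegral_mono_on (hgio.mul_const _) hgHio measurableSet_Ioc fun x hx => ?_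
        have hHxy : H y ≤ H x := hH_anti (Set.mem_Ioi.2 hx.1) hy hx.2
        exact mul_le_mul_of_nonneg_left hHxy (hgpos x hx.1.le).le
      rwa [MeasureTheory.integral_mul_const] at h1
    have hCH : (1/(ε^2*H₀)) * H₀ = (1/ε)^2 := by
      rw [div_pow, one_pow]
      field_simp [hε.ne', hH₀pos.ne']
    have hgy : 1/ε < g y := hg1 y hy
    have hHy : 0 < H y := hH_pos y hy
    have hHyle : H y ≤ H₀ := hHle y hy
    have hCpos : 0 < 1/(ε^2*H₀) := by positivity
    have hPnn : 0 ≤ P :=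
      setIntegral_nonneg measurableSet_Ioc fun x hx => (hgpos x hx.1.le).le
    have hq : (1/ε)^2 < g y ^2 := by nlinarith [hgy, (by positivity : (0:ℝ) < 1/ε)]
    have hCHy : (1/(ε^2*H₀)) * H y ≤ (1/ε)^2 := by
      calc (1/(ε^2*H₀)) * H y ≤ (1/(ε^2*H₀)) * H₀ :=
            mul_le_mul_of_nonneg_left hHyle hCpos.le
        _ = (1/ε)^2 := hCH
    rw [hFTC] at hcomp
    nlinarith [hcomp, hCHy, hq]
  · -- lim_atTop
    refine ⟨1/ε + M, by positivity, ?_⟩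
    have ht : Filter.Tendsto F Filter.atTop (nhds M) :=
      MeasureTheory.intervalIntegral_tendsto_integral_Ioi (-A) hH_int tendsto_id
    have ht2 : Filter.Tendsto g Filter.atTop (nhds (1/ε + M)) := by
      have h1 := ht.const_add (1/ε)
      exact h1.congr fun y => (hgF y).symm
    refine Filter.Tendsto.congr' ?_ ht2
    exact Filter.eventually_of_mem (Ioi_mem_atTop (-A)) fun y hy => (hdG y hy).symm
end

section
/- Let A ∈ ℝ, let ε > 0, and let H ∈ C^∞((−A, ∞)) be strictly positive, nonincreasing, and integrable on (−A, ∞), such that H(−A⁺) := lim_{y→−A⁺} H(y) exists and is finite. Define G₁(y) := 1/ε + ∫_{−A}^{y} H(t) dt and G_{ε,H}(y) := 1/(ε²·H(−A⁺)) + ∫_{−A}^{y} G₁(t) dt for y ∈ (−A, ∞). Then lim_{y→∞} G_{ε,H}'(y) = 1/ε + ∫_{−A}^{∞} H(t) dt, and G_{ε,H}'(y)/G_{ε,H}(y) ≤ ε·H(−A⁺) for every y ∈ (−A, ∞). -/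
open Filter Topology Set MeasureTheory

/-- `G_{ε,H}'(y) → 1/ε + ∫_{−A}^∞ H` as `y → ∞`, and
`G_{ε,H}'(y)/G_{ε,H}(y) ≤ ε·H(−A⁺)` for every `y ∈ (−A, ∞)`. -/
theorem GepsH_ratio_bound (A ε : ℝ) (hε : 0 < ε) (H : ℝ → ℝ)
    (hH_smooth : ContDiffOn ℝ (⊤ : ℕ∞) H (Set.Ioi (-A)))
    (hH_pos : ∀ y ∈ Set.Ioi (-A), 0 < H y)
    (hH_anti : AntitoneOn H (Set.Ioi (-A)))
    (hH_int : MeasureTheory.IntegrableOn H (Set.Ioi (-A)))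
    (H₀ : ℝ) (hH₀ : Filter.Tendsto H (nhdsWithin (-A) (Set.Ioi (-A))) (nhds H₀)) :
    Filter.Tendsto (deriv (GepsH A ε H₀ H)) Filter.atTop
      (nhds (1 / ε + ∫ t in Set.Ioi (-A), H t)) ∧
    ∀ y ∈ Set.Ioi (-A), deriv (GepsH A ε H₀ H) y / GepsH A ε H₀ H y ≤ ε * H₀ := by
  -- H is interval integrable on [-A, y] for y > -A
  have hHii : ∀ y : ℝ, -A ≤ y → IntervalIntegrable H volume (-A) y := by
    intro y hy
    rw [intervalIntegrable_iff_integrableOn_Ioc_of_le hy]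
    exact hH_int.mono_set Ioc_subset_Ioi_self
  -- nonnegativity of ∫_{-A}^y H
  have hIntNonneg : ∀ y : ℝ, -A ≤ y → 0 ≤ ∫ t in (-A)..y, H t := by
    intro y hy
    refine intervalIntegral.integral_nonneg_of_ae_restrict hy ?_
    rw [← MeasureTheory.Measure.restrict_congr_set Ioc_ae_eq_Icc]
    filter_upwards [MeasureTheory.ae_restrict_mem measurableSet_Ioc] with x hx
    exact (hH_pos x hx.1).le
  -- Gone is continuous on [-A, b]
  have hGoneCont : ∀ b : ℝ, -A ≤ b → ContinuousOn (Gone A ε H) (Icc (-A) b) := by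
    intro b hb
    have h1 : IntegrableOn H (uIcc (-A) b) := by
      rw [uIcc_of_le hb, integrableOn_Icc_iff_integrableOn_Ioc]
      exact hH_int.mono_set Ioc_subset_Ioi_self
    have : ContinuousOn (Gone A ε H) (uIcc (-A) b) :=
      (continuousOn_const (c := 1 / ε)).add
        (intervalIntegral.continuousOn_primitive_interval h1)
    rw [uIcc_of_le hb] at this
    exact this
  have hGoneCt : ∀ y : ℝ, -A < y → ContinuousAt (Gone A ε H) y := by
    intro y hy
    exact (hGoneCont (y + 1) (by linarith)).continuousAt
      (Icc_mem_nhds hy (lt_add_one y))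
  have hGoneContIoi : ContinuousOn (Gone A ε H) (Ioi (-A)) :=
    fun x hx => (hGoneCt x hx).continuousWithinAt
  -- Gone interval integrable
  have hGii : ∀ y : ℝ, -A ≤ y → IntervalIntegrable (Gone A ε H) volume (-A) y := by
    intro y hy
    refine ContinuousOn.intervalIntegrable ?_
    rw [uIcc_of_le hy]; exact hGoneCont y hy
  -- derivative of GepsH
  have hDeriv : ∀ y : ℝ, -A < y →
      HasDerivAt (GepsH A ε H₀ H) (Gone A ε H y) y := by
    intro y hy
    have hmeas : StronglyMeasurableAtFilter (Gone A ε H) (𝓝 y) volume :=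
      hGoneContIoi.stronglyMeasurableAtFilter isOpen_Ioi y hy
    have h := intervalIntegral.integral_hasDerivAt_right (hGii y hy.le) hmeas (hGoneCt y hy)
    exact h.const_add (1 / (ε ^ 2 * H₀))
  constructor
  · -- limit of the derivative
    have h1 : Tendsto (fun y : ℝ => ∫ t in (-A)..y, H t) atTop
        (𝓝 (∫ t in Ioi (-A), H t)) :=
      MeasureTheory.intervalIntegral_tendsto_integral_Ioi _ hH_int tendsto_id
    have h2 : Tendsto (Gone A ε H) atTop (𝓝 (1 / ε + ∫ t in Ioi (-A), H t)) :=
      tendsto_const_nhds.add h1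
    refine h2.congr' ?_
    filter_upwards [eventually_gt_atTop (-A)] with y hy
    exact ((hDeriv y hy).deriv).symm
  · -- the ratio bound
    intro y hy
    rw [mem_Ioi] at hy
    -- H₀ bounds
    have hHleH₀ : ∀ t : ℝ, -A < t → H t ≤ H₀ := by
      intro t ht
      refine ge_of_tendsto hH₀ ?_
      filter_upwards [self_mem_nhdsWithin,
        eventually_nhdsWithin_of_eventually_nhds (eventually_lt_nhds ht)] with x hx hxt
      exact hH_anti (mem_Ioi.2 hx) (mem_Ioi.2 ht) hxt.le
    have hH₀pos : 0 < H₀ :=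
      lt_of_lt_of_le (hH_pos (-A + 1) (by simp)) (hHleH₀ (-A + 1) (by linarith))
    -- Gone ≥ 1/ε on Ioi
    have hGoneLB : ∀ t : ℝ, -A < t → 1 / ε ≤ Gone A ε H t := by
      intro t ht
      have := hIntNonneg t ht.le
      simp only [Gone]; linarith
    have hGonePos : 0 < Gone A ε H y :=
      lt_of_lt_of_le (by positivity) (hGoneLB y hy)
    -- ∫ Gone ≥ 0
    have hIntGoneNonneg : 0 ≤ ∫ t in (-A)..y, Gone A ε H t := by
      refine intervalIntegral.integral_nonneg_of_ae_restrict hy.le ?_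
      rw [← MeasureTheory.Measure.restrict_congr_set Ioc_ae_eq_Icc]
      filter_upwards [MeasureTheory.ae_restrict_mem measurableSet_Ioc] with x hx
      exact le_trans (by positivity) (hGoneLB x hx.1)
    have hGepsHPos : 0 < GepsH A ε H₀ H y := by
      have : (0:ℝ) < 1 / (ε ^ 2 * H₀) := by positivity
      simp only [GepsH]; linarith
    rw [(hDeriv y hy).deriv, div_le_iff₀ hGepsHPos]
    -- Goal: Gone y ≤ ε * H₀ * GepsH y
    have key : (∫ t in (-A)..y, H t) ≤ ∫ t in (-A)..y, ε * H₀ * Gone A ε H t := by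
      refine intervalIntegral.integral_mono_ae_restrict hy.le (hHii y hy.le)
        ((hGii y hy.le).const_mul _) ?_
      rw [← MeasureTheory.Measure.restrict_congr_set Ioc_ae_eq_Icc]
      filter_upwards [MeasureTheory.ae_restrict_mem measurableSet_Ioc] with x hx
      calc H x ≤ H₀ := hHleH₀ x hx.1
        _ = ε * H₀ * (1 / ε) := by field_simp
        _ ≤ ε * H₀ * Gone A ε H x := by
            exact mul_le_mul_of_nonneg_left (hGoneLB x hx.1) (by positivity)
    have hconst : ε * H₀ * (1 / (ε ^ 2 * H₀)) = 1 / ε := by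
      field_simp
    calc Gone A ε H y = 1 / ε + ∫ t in (-A)..y, H t := rfl
      _ ≤ 1 / ε + ∫ t in (-A)..y, ε * H₀ * Gone A ε H t := by linarith
      _ = ε * H₀ * (1 / (ε ^ 2 * H₀)) + ε * H₀ * ∫ t in (-A)..y, Gone A ε H t := by
          rw [hconst, intervalIntegral.integral_const_mul]
      _ = ε * H₀ * GepsH A ε H₀ H y := by simp only [GepsH]; ring
end

section
/- Let k ≥ 1 be an integer, let α₁, …, α_k > 0, δ > 0, R > 0, and let χ : ℝ → [0, ∞) be continuous with compact support. Then lim_{ε→0⁺} ∫_{(0,R)^k} χ(log((r₁^{2α₁}⋯r_k^{2α_k})/ε)) · (r₁⋯r_k)^{2δ} · (dr₁/r₁)⋯(dr_k/r_k) = 0, the integral being with respect to Lebesgue measure on (0,R)^k with density ∏_{i=1}^k r_i^{2δ−1}. -/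
open MeasureTheory Set Filter Topology

/-!
Dominated convergence. For each fixed `r` in the open cube the argument `log (∏ rᵢ^{2αᵢ} / ε)`
tends to `+∞` as `ε → 0⁺`, so the integrand is eventually `0` because `χ` has compact support;
and the integrand is dominated by `sup |χ| · ∏ rᵢ^{2δ-1}`, which is integrable on the cube
since `2δ - 1 > -1`.
-/

theorem tendsto_integral_comp_mul_of_tendsto_atTop {α ι : Type*} [MeasurableSpace α]
    {μ : Measure α} {l : Filter ι} [l.IsCountablyGenerated] {χ : ℝ → ℝ} {C : ℝ}
    (hχ_meas : Measurable χ) (hχ_bdd : ∀ x, ‖χ x‖ ≤ C) (hχ_lim : Tendsto χ atTop (𝓝 0))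
    {u : ι → α → ℝ} (hu_meas : ∀ ε, Measurable (u ε))
    (hu_lim : ∀ᵐ x ∂μ, Tendsto (fun ε => u ε x) l atTop) {g : α → ℝ} (hg : Integrable g μ) :
    Tendsto (fun ε => ∫ x, χ (u ε x) * g x ∂μ) l (𝓝 0) := by
  have hF_lim : ∀ᵐ x ∂μ, Tendsto (fun ε => χ (u ε x) * g x) l (𝓝 0) := by
    filter_upwards [hu_lim] with x hx
    simpa using (hχ_lim.comp hx).mul_const (g x)
  simpa using tendsto_integral_filter_of_dominated_convergence
    (F := fun ε x => χ (u ε x) * g x) (fun x => C * ‖g x‖)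
    (Eventually.of_forall fun ε =>
      ((hχ_meas.comp (hu_meas ε)).aestronglyMeasurable.mul hg.aestronglyMeasurable))
    (Eventually.of_forall fun ε => Eventually.of_forall fun x => by
      rw [norm_mul]
      exact mul_le_mul_of_nonneg_right (hχ_bdd _) (norm_nonneg _))
    (hg.norm.const_mul C) hF_lim

theorem integrableOn_Ioo_rpow {s : ℝ} (hs : -1 < s) (R : ℝ) :
    IntegrableOn (fun x => x ^ s) (Ioo (0 : ℝ) R) := by
  rcases lt_or_ge 0 R with hR | hR
  · exact (intervalIntegral.integrableOn_Ioo_rpow_iff hR).2 hs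
  · simp [Ioo_eq_empty_of_le hR]

theorem integrableOn_univ_pi_prod {ι E : Type*} [Fintype ι] [MeasurableSpace E]
    {μ : ι → Measure E} [∀ i, SigmaFinite (μ i)] {f : ι → E → ℝ} {s : ι → Set E}
    (hf : ∀ i, IntegrableOn (f i) (s i) (μ i)) :
    IntegrableOn (fun x : ι → E => ∏ i, f i (x i)) (univ.pi s) (Measure.pi μ) := by
  rw [IntegrableOn, Measure.restrict_pi_pi]
  exact Integrable.fintype_prod hf

theorem tendsto_log_const_div_nhdsGT_zero {P : ℝ} (hP : 0 < P) :
    Tendsto (fun ε => Real.log (P / ε)) (𝓝[>] 0) atTop := by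
  simp only [div_eq_mul_inv]
  exact Real.tendsto_log_atTop.comp (tendsto_inv_nhdsGT_zero.const_mul_atTop hP)

theorem claim1_integral_tendsto_zero_general (k : ℕ)
    (α : Fin k → ℝ) (δ R : ℝ) (hδ : 0 < δ)
    (χ : ℝ → ℝ) (hχ_cont : Continuous χ) (hχ_supp : HasCompactSupport χ) :
    Filter.Tendsto
      (fun ε : ℝ =>
        ∫ r in Set.univ.pi fun _ : Fin k => Set.Ioo (0:ℝ) R,
          χ (Real.log ((∏ i, r i ^ (2 * α i)) / ε)) * ∏ i, r i ^ (2 * δ - 1))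
      (nhdsWithin 0 (Set.Ioi (0:ℝ))) (nhds 0) := by
  obtain ⟨C, hC⟩ := hχ_cont.bounded_above_of_compact_support hχ_supp
  have hS : MeasurableSet (univ.pi fun _ : Fin k => Ioo (0 : ℝ) R) :=
    MeasurableSet.univ_pi fun _ => measurableSet_Ioo
  have hg : IntegrableOn (fun r : Fin k → ℝ => ∏ i, r i ^ (2 * δ - 1))
      (univ.pi fun _ => Ioo 0 R) :=
    integrableOn_univ_pi_prod fun _ => integrableOn_Ioo_rpow (by linarith) R
  refine tendsto_integral_comp_mul_of_tendsto_atTop hχ_cont.measurable hC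
    (hχ_supp.is_zero_at_infty.mono_left atTop_le_cocompact) (fun ε => by fun_prop) ?_ hg
  refine ae_restrict_of_forall_mem hS fun r hr => tendsto_log_const_div_nhdsGT_zero ?_
  exact Finset.prod_pos fun i _ => Real.rpow_pos_of_pos (hr i (mem_univ i)).1 _

/-- for `αᵢ > 0`, `δ > 0`, `R > 0` and continuous compactly supported
`χ ≥ 0`, one has
`∫_{(0,R)^k} χ(log((r₁^{2α₁}⋯r_k^{2α_k})/ε)) (r₁⋯r_k)^{2δ} dr₁/r₁ ⋯ dr_k/r_k → 0`
as `ε → 0⁺`. -/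
theorem claim1_integral_tendsto_zero (k : ℕ) (hk : 1 ≤ k)
    (α : Fin k → ℝ) (hα : ∀ i, 0 < α i) (δ R : ℝ) (hδ : 0 < δ) (hR : 0 < R)
    (χ : ℝ → ℝ) (hχ_cont : Continuous χ) (hχ_supp : HasCompactSupport χ)
    (hχ_nonneg : ∀ x, 0 ≤ χ x) :
    Filter.Tendsto
      (fun ε : ℝ =>
        ∫ r in Set.univ.pi fun _ : Fin k => Set.Ioo (0:ℝ) R,
          χ (Real.log ((∏ i, r i ^ (2 * α i)) / ε)) * ∏ i, r i ^ (2 * δ - 1))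
      (nhdsWithin 0 (Set.Ioi (0:ℝ))) (nhds 0) :=
  claim1_integral_tendsto_zero_general k α δ R hδ χ hχ_cont hχ_supp
end

section
/- Let k ≥ 2 be an integer, let α₁, …, α_k > 0 with A₀ := α₁ + ⋯ + α_k, let δ ∈ (0, 1], R > 0, and let χ : ℝ → [0, ∞) be continuous with compact support and ∫_ℝ χ = 1. Then lim_{ε→0⁺} ∫_{Δ_{k−1}} ( ∫₀^R χ(log((σ₁^{α₁}⋯σ_k^{α_k}·r^{2A₀})/ε)) dr/r ) · (σ₁⋯σ_{k−1}σ_k)^{δ−1} dσ₁⋯dσ_{k−1} = (1/(2A₀)) ∫_{Δ_{k−1}} (σ₁⋯σ_{k−1}σ_k)^{δ−1} dσ₁⋯dσ_{k−1}, and the right-hand integral is finite. -/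
open MeasureTheory Set Filter Topology

set_option linter.unusedVariables false
set_option linter.unnecessarySeqFocus false

namespace SphAux

variable {d : ℕ} {δ : ℝ}

def Spx (d : ℕ) : Set (Fin d → ℝ) := {σ | (∀ i, 0 ≤ σ i) ∧ ∑ i, σ i ≤ 1}

lemma isClosed_Spx : IsClosed (Spx d) := by
  have h1 : IsClosed {σ : Fin d → ℝ | ∀ i, 0 ≤ σ i} := by
    have : {σ : Fin d → ℝ | ∀ i, 0 ≤ σ i} = ⋂ i, {σ : Fin d → ℝ | 0 ≤ σ i} := by
      ext σ; simp
    rw [this]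
    exact isClosed_iInter fun i => isClosed_le continuous_const (continuous_apply i)
  have h2 : IsClosed {σ : Fin d → ℝ | ∑ i, σ i ≤ 1} :=
    isClosed_le (by continuity) continuous_const
  exact h1.inter h2

lemma Spx_subset_Icc : Spx d ⊆ Set.Icc (0 : Fin d → ℝ) 1 := by
  intro σ ⟨h0, h1⟩
  constructor
  · intro i; exact h0 i
  · intro i
    calc σ i ≤ ∑ j, σ j := Finset.single_le_sum (fun j _ => h0 j) (Finset.mem_univ i)
    _ ≤ 1 := h1

lemma isCompact_Spx : IsCompact (Spx d) :=
  isCompact_Icc.of_isClosed_subset isClosed_Spx Spx_subset_Icc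

lemma measurableSet_Spx : MeasurableSet (Spx d) := isClosed_Spx.measurableSet

lemma volume_Spx_lt_top : volume (Spx d) < ⊤ := isCompact_Spx.measure_lt_top

lemma null_coord (i : Fin d) : volume {σ : Fin d → ℝ | σ i = 0} = 0 := by
  have h : {σ : Fin d → ℝ | σ i = 0} = (LinearMap.ker (LinearMap.proj (R := ℝ)
      (φ := fun _ : Fin d => ℝ) i) : Set (Fin d → ℝ)) := by
    ext σ; simp [LinearMap.mem_ker]
  rw [h]
  refine Measure.addHaar_submodule _ _ ?_
  intro htop
  have : (Pi.single i 1 : Fin d → ℝ) ∈ LinearMap.ker (LinearMap.proj (R := ℝ)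
      (φ := fun _ : Fin d => ℝ) i) := htop ▸ Submodule.mem_top
  simp [LinearMap.mem_ker] at this

lemma null_sum_one (hd : d ≠ 0) : volume {σ : Fin d → ℝ | ∑ i, σ i = 1} = 0 := by
  set L : (Fin d → ℝ) →ₗ[ℝ] ℝ := ∑ i, LinearMap.proj i with hL
  have hLapp : ∀ σ, L σ = ∑ i, σ i := by
    intro σ; simp [hL, LinearMap.sum_apply]
  have i0 : Fin d := ⟨0, Nat.pos_of_ne_zero hd⟩
  have hker : volume (LinearMap.ker L : Set (Fin d → ℝ)) = 0 := by
    refine Measure.addHaar_submodule _ _ ?_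
    intro htop
    have : (Pi.single i0 1 : Fin d → ℝ) ∈ LinearMap.ker L := htop ▸ Submodule.mem_top
    rw [LinearMap.mem_ker, hLapp] at this
    simp at this
  have hset : {σ : Fin d → ℝ | ∑ i, σ i = 1}
      = (fun σ : Fin d → ℝ => σ + (-(Pi.single i0 1))) ⁻¹' (LinearMap.ker L : Set (Fin d → ℝ)) := by
    ext σ
    simp only [Set.mem_setOf_eq, Set.mem_preimage, SetLike.mem_coe, LinearMap.mem_ker, hLapp,
      Pi.add_apply, Pi.neg_apply]
    rw [Finset.sum_add_distrib]
    have h1 : ∑ i, (-(Pi.single i0 1) : Fin d → ℝ) i = -1 := by simp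
    simp only [Pi.neg_apply] at h1 ⊢
    rw [h1]
    constructor <;> intro h <;> linarith
  rw [hset, measure_preimage_add_right]
  exact hker


def Lmap (d : ℕ) (j : Fin d) : (Fin d → ℝ) →ₗ[ℝ] (Fin d → ℝ) where
  toFun σ := Function.update σ j (-∑ i, σ i)
  map_add' σ τ := by
    funext i
    by_cases h : i = j <;> simp [Function.update_apply, h, Finset.sum_add_distrib] <;> ring
  map_smul' c σ := by
    funext i
    by_cases h : i = j <;> simp [Function.update_apply, h, Finset.mul_sum]

lemma sum_update (σ : Fin d → ℝ) (j : Fin d) (v : ℝ) :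
    ∑ i, Function.update σ j v i = v + ∑ i ∈ Finset.univ.erase j, σ i := by
  rw [Finset.sum_update_of_mem (Finset.mem_univ j)]
  congr 1
  apply Finset.sum_congr _ (fun _ _ => rfl)
  ext i; simp [Finset.mem_erase, and_comm]

lemma sum_erase (σ : Fin d → ℝ) (j : Fin d) :
    ∑ i ∈ Finset.univ.erase j, σ i = (∑ i, σ i) - σ j := by
  rw [eq_sub_iff_add_eq, Finset.sum_erase_add _ _ (Finset.mem_univ j)]

lemma Lmap_invol (j : Fin d) : (Lmap d j) ∘ₗ (Lmap d j) = LinearMap.id := by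
  refine LinearMap.ext fun σ => funext fun i => ?_
  simp only [LinearMap.comp_apply, LinearMap.id_apply, Lmap, LinearMap.coe_mk, AddHom.coe_mk]
  have hsum : ∑ i, Function.update σ j (-∑ i, σ i) i = -σ j := by
    rw [sum_update, sum_erase]; ring
  by_cases h : i = j
  · subst h; rw [Function.update_apply, if_pos rfl, hsum, neg_neg]
  · rw [Function.update_apply, if_neg h, Function.update_apply, if_neg h]

lemma Lmap_det_abs (j : Fin d) : |(Lmap d j).det| = 1 := by
  have h : (Lmap d j).det * (Lmap d j).det = 1 := by
    rw [← LinearMap.det_comp, Lmap_invol, LinearMap.det_id]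
  rcases mul_self_eq_one_iff.mp h with h1 | h1 <;> rw [h1] <;> norm_num

lemma measurePreserving_Lmap (j : Fin d) :
    MeasurePreserving (Lmap d j) (volume : Measure (Fin d → ℝ)) volume := by
  have hdet : (Lmap d j).det ≠ 0 := by
    intro h
    have := Lmap_det_abs j
    rw [h] at this
    norm_num at this
  refine ⟨(Lmap d j).continuous_of_finiteDimensional.measurable, ?_⟩
  rw [Measure.map_linearMap_addHaar_eq_smul_addHaar volume hdet]
  rw [abs_inv, Lmap_det_abs]
  simp

def Tmap (d : ℕ) (j : Fin d) : (Fin d → ℝ) → (Fin d → ℝ) :=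
  fun σ => Lmap d j σ + Pi.single j 1

lemma Tmap_eq (j : Fin d) (σ : Fin d → ℝ) :
    Tmap d j σ = Function.update σ j (1 - ∑ i, σ i) := by
  funext i
  by_cases h : i = j
  · subst h
    simp [Tmap, Lmap, Function.update_apply, Pi.single_apply]
    ring
  · simp [Tmap, Lmap, Function.update_apply, h, Pi.single_apply]

lemma sum_Tmap (j : Fin d) (σ : Fin d → ℝ) : ∑ i, Tmap d j σ i = 1 - σ j := by
  rw [Tmap_eq, sum_update, sum_erase]; ring

lemma Tmap_invol (j : Fin d) (σ : Fin d → ℝ) : Tmap d j (Tmap d j σ) = σ := by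
  rw [Tmap_eq (σ := Tmap d j σ), sum_Tmap, Tmap_eq]
  have : (1 : ℝ) - (1 - σ j) = σ j := by ring
  rw [this, Function.update_idem, Function.update_eq_self]

lemma measurePreserving_Tmap (j : Fin d) :
    MeasurePreserving (Tmap d j) (volume : Measure (Fin d → ℝ)) volume :=
  (measurePreserving_add_right volume (Pi.single j 1)).comp (measurePreserving_Lmap j)

lemma continuous_Tmap (j : Fin d) : Continuous (Tmap d j) :=
  ((Lmap d j).continuous_of_finiteDimensional).add continuous_const

def Thom (d : ℕ) (j : Fin d) : Homeomorph (Fin d → ℝ) (Fin d → ℝ) where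
  toFun := Tmap d j
  invFun := Tmap d j
  left_inv := Tmap_invol j
  right_inv := Tmap_invol j
  continuous_toFun := continuous_Tmap j
  continuous_invFun := continuous_Tmap j

lemma measurableEmbedding_Tmap (j : Fin d) : MeasurableEmbedding (Tmap d j) :=
  (Thom d j).measurableEmbedding

lemma Tmap_mem_Spx (j : Fin d) {σ : Fin d → ℝ} (hσ : σ ∈ Spx d) : Tmap d j σ ∈ Spx d := by
  obtain ⟨h0, h1⟩ := hσ
  constructor
  · intro i
    rw [Tmap_eq, Function.update_apply]
    split
    · linarith
    · exact h0 i
  · rw [sum_Tmap]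
    have := h0 j
    linarith

lemma Tmap_preimage_Spx (j : Fin d) : Tmap d j ⁻¹' Spx d = Spx d := by
  ext σ
  constructor
  · intro h
    have := Tmap_mem_Spx j h
    rwa [Tmap_invol] at this
  · exact fun h => Tmap_mem_Spx j h


lemma aux_rpow {t p e K : ℝ} (hK : 0 < K) (ht : 1 / K ≤ t) (hp : 0 ≤ p) (he : e < 0) :
    (t * p) ^ e ≤ K ^ (-e) * p ^ e := by
  rcases hp.eq_or_lt with h | h
  · rw [← h, mul_zero, Real.zero_rpow he.ne, mul_zero]
  · have h0 : 0 < p / K := div_pos h hK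
    have hle : p / K ≤ t * p := by
      rw [div_eq_mul_one_div, mul_comm]
      exact mul_le_mul_of_nonneg_right ht h.le
    calc (t * p) ^ e ≤ (p / K) ^ e := Real.rpow_le_rpow_of_nonpos h0 hle he.le
    _ = K ^ (-e) * p ^ e := by
      rw [Real.div_rpow h.le hK.le, Real.rpow_neg hK.le, div_eq_mul_inv, mul_comm]

lemma prod_rpow_update (σ : Fin d → ℝ) (j : Fin d) (v e : ℝ) :
    ∏ i, (Function.update σ j v i) ^ e = v ^ e * ∏ i ∈ Finset.univ.erase j, σ i ^ e := by
  have h : (fun i => (Function.update σ j v i) ^ e)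
      = Function.update (fun i => σ i ^ e) j (v ^ e) := by
    funext i
    by_cases hij : i = j <;> simp [Function.update_apply, hij]
  calc ∏ i, (Function.update σ j v i) ^ e
      = ∏ i, Function.update (fun i => σ i ^ e) j (v ^ e) i := by rw [h]
    _ = v ^ e * ∏ i ∈ Finset.univ.erase j, σ i ^ e := by
      rw [Finset.prod_update_of_mem (Finset.mem_univ j)]
      congr 1
      apply Finset.prod_congr _ (fun _ _ => rfl)
      ext i; simp [Finset.mem_erase, and_comm]


-- integrability of x ^ (δ-1) indicator on [0,1]
lemma integrable_indicator_rpow (hδ : 0 < δ) :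
    Integrable ((Set.Icc (0:ℝ) 1).indicator (fun x => x ^ (δ - 1))) := by
  rw [integrable_indicator_iff measurableSet_Icc]
  have h : IntegrableOn (fun x : ℝ => x ^ (δ - 1)) (Set.Ioc (0:ℝ) 1) := by
    have := intervalIntegral.intervalIntegrable_rpow' (a := 0) (b := 1) (r := δ - 1)
      (by linarith)
    rw [intervalIntegrable_iff] at this
    simpa [Set.uIoc_of_le (by norm_num : (0:ℝ) ≤ 1)] using this
  exact h.congr_set_ae (Ioc_ae_eq_Icc (α := ℝ) (a := 0) (b := 1)).symm

lemma integrableOn_prod_rpow (hδ : 0 < δ) :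
    IntegrableOn (fun σ : Fin d → ℝ => ∏ i, σ i ^ (δ - 1)) (Spx d) := by
  have hglob : Integrable
      (fun σ : Fin d → ℝ => ∏ i, (Set.Icc (0:ℝ) 1).indicator (fun x => x ^ (δ - 1)) (σ i)) :=
    Integrable.fintype_prod (fun _ => integrable_indicator_rpow hδ)
  refine (hglob.integrableOn).congr_fun ?_ measurableSet_Spx
  intro σ hσ
  refine Finset.prod_congr rfl fun i _ => ?_
  rw [Set.indicator_of_mem]
  exact ⟨(Spx_subset_Icc hσ).1 i, (Spx_subset_Icc hσ).2 i⟩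


noncomputable def gfun (d : ℕ) (δ : ℝ) : (Fin d → ℝ) → ℝ := fun σ =>
  (∏ i, σ i ^ (δ - 1)) +
    ∑ j, ((1 - ∑ i, σ i) ^ (δ - 1) * ∏ i ∈ Finset.univ.erase j, σ i ^ (δ - 1))

lemma gfun_integrableOn (hδ : 0 < δ) : IntegrableOn (gfun d δ) (Spx d) := by
  refine (integrableOn_prod_rpow hδ).add (integrable_finset_sum _ fun j _ => ?_)
  have hcomp : (fun σ : Fin d → ℝ => ∏ i, σ i ^ (δ - 1)) ∘ (Tmap d j)
      = fun σ : Fin d → ℝ =>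
        (1 - ∑ i, σ i) ^ (δ - 1) * ∏ i ∈ Finset.univ.erase j, σ i ^ (δ - 1) := by
    funext σ
    simp only [Function.comp_apply, Tmap_eq]
    exact prod_rpow_update σ j _ _
  have := ((measurePreserving_Tmap j).integrableOn_comp_preimage
    (measurableEmbedding_Tmap j) (s := Spx d)).mpr (integrableOn_prod_rpow (d := d) hδ)
  rwa [Tmap_preimage_Spx, hcomp] at this

lemma key_bound (hδ1 : δ < 1) {σ : Fin d → ℝ} (hσ : σ ∈ Spx d) :
    ((∏ i, σ i) * (1 - ∑ i, σ i)) ^ (δ - 1) ≤ ((d : ℝ) + 1) ^ (1 - δ) * gfun d δ σ := by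
  obtain ⟨h0, h1⟩ := hσ
  set K : ℝ := (d : ℝ) + 1 with hK
  have hKpos : (0:ℝ) < K := by positivity
  set y : ℝ := 1 - ∑ i, σ i with hy
  have hy0 : 0 ≤ y := by simp [hy]; linarith
  have he : δ - 1 < 0 := by linarith
  have hne : -(δ - 1) = 1 - δ := by ring
  have hterm_nonneg : ∀ j ∈ Finset.univ, 0 ≤ y ^ (δ - 1) * ∏ i ∈ Finset.univ.erase j, σ i ^ (δ - 1) := by
    intro j _
    exact mul_nonneg (Real.rpow_nonneg hy0 _)
      (Finset.prod_nonneg fun i _ => Real.rpow_nonneg (h0 i) _)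
  have hprod_nonneg : 0 ≤ ∏ i, σ i ^ (δ - 1) :=
    Finset.prod_nonneg fun i _ => Real.rpow_nonneg (h0 i) _
  -- some coordinate (or y) is at least 1/K
  by_cases hcase : 1 / K ≤ y
  · -- bound via the first term of gfun
    have h2 : ((∏ i, σ i) * y) ^ (δ - 1) ≤ K ^ (1 - δ) * (∏ i, σ i) ^ (δ - 1) := by
      rw [mul_comm (∏ i, σ i) y, ← hne]
      exact aux_rpow hKpos hcase (Finset.prod_nonneg fun i _ => h0 i) he
    have h3 : (∏ i, σ i) ^ (δ - 1) = ∏ i, σ i ^ (δ - 1) :=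
      (Real.finset_prod_rpow _ _ (fun i _ => h0 i) _).symm
    calc ((∏ i, σ i) * y) ^ (δ - 1) ≤ K ^ (1 - δ) * (∏ i, σ i) ^ (δ - 1) := h2
      _ = K ^ (1 - δ) * ∏ i, σ i ^ (δ - 1) := by rw [h3]
      _ ≤ K ^ (1 - δ) * gfun d δ σ := by
          refine mul_le_mul_of_nonneg_left ?_ (Real.rpow_nonneg hKpos.le _)
          exact le_add_of_nonneg_right (Finset.sum_nonneg hterm_nonneg)
  · -- some σ j is at least 1/K
    push_neg at hcase
    have hex : ∃ j, 1 / K ≤ σ j := by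
      by_contra hno
      push_neg at hno
      have hsum : ∑ i, σ i ≤ (d : ℝ) * (1 / K) := by
        calc ∑ i, σ i ≤ ∑ _i : Fin d, (1 / K) :=
          Finset.sum_le_sum fun i _ => (hno i).le
        _ = (d : ℝ) * (1 / K) := by simp [mul_comm]
      have h1y : 1 - y ≤ (d:ℝ) * (1/K) := by
        have hyy : 1 - y = ∑ i, σ i := by rw [hy]; ring
        rw [hyy]; exact hsum
      have heq : (d:ℝ) * (1/K) + (1/K) = 1 := by
        rw [hK]; field_simp
      linarith
    obtain ⟨j, hj⟩ := hex
    have hsplit : (∏ i, σ i) * y = σ j * ((∏ i ∈ Finset.univ.erase j, σ i) * y) := by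
      rw [← Finset.mul_prod_erase _ _ (Finset.mem_univ j)]
      ring
    have h2 : (σ j * ((∏ i ∈ Finset.univ.erase j, σ i) * y)) ^ (δ - 1)
        ≤ K ^ (1 - δ) * ((∏ i ∈ Finset.univ.erase j, σ i) * y) ^ (δ - 1) := by
      rw [← hne]
      exact aux_rpow hKpos hj
        (mul_nonneg (Finset.prod_nonneg fun i _ => h0 i) hy0) he
    have h3 : ((∏ i ∈ Finset.univ.erase j, σ i) * y) ^ (δ - 1)
        = y ^ (δ - 1) * ∏ i ∈ Finset.univ.erase j, σ i ^ (δ - 1) := by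
      rw [Real.mul_rpow (Finset.prod_nonneg fun i _ => h0 i) hy0]
      rw [← Real.finset_prod_rpow _ _ (fun i _ => h0 i) _]
      ring
    calc ((∏ i, σ i) * y) ^ (δ - 1)
        = (σ j * ((∏ i ∈ Finset.univ.erase j, σ i) * y)) ^ (δ - 1) := by rw [hsplit]
      _ ≤ K ^ (1 - δ) * ((∏ i ∈ Finset.univ.erase j, σ i) * y) ^ (δ - 1) := h2
      _ = K ^ (1 - δ) * (y ^ (δ - 1) * ∏ i ∈ Finset.univ.erase j, σ i ^ (δ - 1)) := by rw [h3]
      _ ≤ K ^ (1 - δ) * gfun d δ σ := by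
          refine mul_le_mul_of_nonneg_left ?_ (Real.rpow_nonneg hKpos.le _)
          refine le_add_of_nonneg_left hprod_nonneg |>.trans' ?_
          exact Finset.single_le_sum hterm_nonneg (Finset.mem_univ j)

lemma integrableOn_w (hδ : δ ∈ Set.Ioc (0:ℝ) 1) :
    IntegrableOn (fun σ : Fin d → ℝ => ((∏ i, σ i) * (1 - ∑ i, σ i)) ^ (δ - 1)) (Spx d) := by
  obtain ⟨hδ0, hδ1⟩ := hδ
  rcases eq_or_lt_of_le hδ1 with h1 | h1
  · subst h1
    simp only [sub_self, Real.rpow_zero]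
    rw [IntegrableOn, integrable_const_iff]
    right
    constructor
    rw [Measure.restrict_apply_univ]
    exact volume_Spx_lt_top
  · have hg : IntegrableOn (fun σ => (((d:ℝ)+1) ^ (1-δ)) * gfun d δ σ) (Spx d) :=
      (gfun_integrableOn hδ0).const_mul _
    refine hg.mono' ?_ ?_
    · apply Measurable.aestronglyMeasurable
      fun_prop
    · rw [ae_restrict_iff' measurableSet_Spx]
      filter_upwards with σ
      intro hσ
      have hnn : 0 ≤ ((∏ i, σ i) * (1 - ∑ i, σ i)) ^ (δ - 1) := by
        apply Real.rpow_nonneg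
        have := hσ.1
        have h2 := hσ.2
        have : 0 ≤ ∏ i, σ i := Finset.prod_nonneg fun i _ => hσ.1 i
        nlinarith [hσ.2]
      rw [Real.norm_eq_abs, abs_of_nonneg hnn]
      exact key_bound h1 hσ


lemma inner_eq {A C ε R : ℝ} (hA : 0 < A) (hC : 0 < C) (hε : 0 < ε) (hR : 0 < R) (χ : ℝ → ℝ) :
    ∫ r in Set.Ioo (0:ℝ) R, χ (Real.log (C * r ^ (2*A) / ε)) / r
      = (1/(2*A)) * ∫ v in Set.Iio (Real.log (C * R ^ (2*A) / ε)), χ v := by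
  set B : ℝ := 2 * A with hBdef
  have hB : 0 < B := by positivity
  set L : ℝ := Real.log C - Real.log ε with hL
  set T : ℝ := Real.log (C * R ^ B / ε) with hT
  have hTval : T = B * Real.log R + L := by
    rw [hT, hL, Real.log_div (by positivity) hε.ne', Real.log_mul hC.ne'
      (by positivity), Real.log_rpow hR]
    ring
  set f : ℝ → ℝ := fun v => Real.exp ((v - L) / B) with hf
  have hfpos : ∀ v, 0 < f v := fun v => Real.exp_pos _
  have himg : f '' Set.Iio T = Set.Ioo (0:ℝ) R := by
    ext r
    constructor
    · rintro ⟨v, hv, rfl⟩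
      refine ⟨hfpos v, ?_⟩
      rw [hf]
      have h1 : (v - L) / B < Real.log R := by
        rw [div_lt_iff₀ hB, mul_comm]
        rw [Set.mem_Iio, hTval] at hv
        linarith
      calc Real.exp ((v - L) / B) < Real.exp (Real.log R) := Real.exp_lt_exp.mpr h1
        _ = R := Real.exp_log hR
    · rintro ⟨hr0, hrR⟩
      refine ⟨B * Real.log r + L, ?_, ?_⟩
      · rw [Set.mem_Iio, hTval]
        have := Real.log_lt_log hr0 hrR
        nlinarith
      · show Real.exp ((B * Real.log r + L - L) / B) = r
        have h2 : (B * Real.log r + L - L) / B = Real.log r := by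
          field_simp
          ring
        rw [h2, Real.exp_log hr0]
  have hder : ∀ v ∈ Set.Iio T, HasDerivWithinAt f (f v / B) (Set.Iio T) v := by
    intro v _
    have h1 : HasDerivAt (fun v : ℝ => (v - L) / B) (1 / B) v := by
      simpa using ((hasDerivAt_id v).sub_const L).div_const B
    have h2 := h1.exp
    have : Real.exp ((v - L) / B) * (1 / B) = f v / B := by
      rw [hf]; ring
    rw [this] at h2
    exact h2.hasDerivWithinAt
  have hinj : Set.InjOn f (Set.Iio T) := by
    intro a _ b _ hab
    have h1 : (a - L) / B = (b - L) / B := Real.exp_injective hab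
    field_simp at h1
    linarith
  rw [← himg, integral_image_eq_integral_abs_deriv_smul measurableSet_Iio hder hinj]
  have hptw : ∀ v ∈ Set.Iio T,
      |f v / B| • (χ (Real.log (C * (f v) ^ (2*A) / ε)) / f v) = (1 / B) * χ v := by
    intro v _
    have hfv := hfpos v
    have hfB : (f v) ^ (2*A) = Real.exp (v - L) := by
      rw [← hBdef, Real.rpow_def_of_pos hfv, hf, Real.log_exp,
        div_mul_cancel₀ _ hB.ne']
    have hlog : Real.log (C * (f v) ^ (2*A) / ε) = v := by
      rw [hfB, Real.log_div (by positivity) hε.ne',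
        Real.log_mul hC.ne' (Real.exp_pos _).ne', Real.log_exp, hL]
      ring
    rw [hlog, smul_eq_mul, abs_of_pos (by positivity)]
    field_simp
  rw [setIntegral_congr_fun measurableSet_Iio hptw, integral_const_mul]


lemma bound_step {a I wv : ℝ} (ha : 0 < a) (hI0 : 0 ≤ I) (hI1 : I ≤ 1) (hw : 0 ≤ wv) :
    ‖(1 / a * I) * wv‖ ≤ 1 / a * wv := by
  rw [Real.norm_eq_abs, abs_of_nonneg (by positivity)]
  calc (1 / a * I) * wv ≤ (1 / a * 1) * wv := by
        refine mul_le_mul_of_nonneg_right ?_ hw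
        exact mul_le_mul_of_nonneg_left hI1 (by positivity)
    _ = 1 / a * wv := by ring


end SphAux

open SphAux

/-- with `A₀ := α₁ + ⋯ + α_k`, `δ ∈ (0,1]`, `R > 0`, and continuous
compactly supported `χ ≥ 0` with `∫χ = 1`,
`∫_{Δ_{k−1}} (∫₀^R χ(log(σ₁^{α₁}⋯σ_k^{α_k} r^{2A₀}/ε)) dr/r) (σ₁⋯σ_{k−1}σ_k)^{δ−1}`
converges, as `ε → 0⁺`, to `(1/(2A₀)) ∫_{Δ_{k−1}} (σ₁⋯σ_{k−1}σ_k)^{δ−1}`,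
the latter integral being finite. -/
theorem spherical_density_limit (k : ℕ) (hk : 2 ≤ k)
    (α : Fin k → ℝ) (hα : ∀ i, 0 < α i) (δ R : ℝ)
    (hδ : δ ∈ Set.Ioc (0:ℝ) 1) (hR : 0 < R)
    (χ : ℝ → ℝ) (hχ_cont : Continuous χ) (hχ_supp : HasCompactSupport χ)
    (hχ_nonneg : ∀ x, 0 ≤ χ x) (hχ_int : ∫ t, χ t = 1) :
    Filter.Tendsto
      (fun ε : ℝ =>
        ∫ σ in {σ : Fin (k - 1) → ℝ | (∀ i, 0 ≤ σ i) ∧ ∑ i, σ i ≤ 1},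
          (∫ r in Set.Ioo (0:ℝ) R,
            χ (Real.log ((∏ i, σ i ^ α (Fin.castLE (Nat.sub_le k 1) i)) *
                (1 - ∑ i, σ i) ^ α ⟨k - 1, by omega⟩ *
                r ^ (2 * ∑ j, α j) / ε)) / r) *
          ((∏ i, σ i) * (1 - ∑ i, σ i)) ^ (δ - 1))
      (nhdsWithin 0 (Set.Ioi (0:ℝ)))
      (nhds ((1 / (2 * ∑ j, α j)) *
        ∫ σ in {σ : Fin (k - 1) → ℝ | (∀ i, 0 ≤ σ i) ∧ ∑ i, σ i ≤ 1},
          ((∏ i, σ i) * (1 - ∑ i, σ i)) ^ (δ - 1))) ∧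
    MeasureTheory.IntegrableOn
      (fun σ : Fin (k - 1) → ℝ => ((∏ i, σ i) * (1 - ∑ i, σ i)) ^ (δ - 1))
      {σ : Fin (k - 1) → ℝ | (∀ i, 0 ≤ σ i) ∧ ∑ i, σ i ≤ 1}
      MeasureTheory.volume := by
  have hd : k - 1 ≠ 0 := by omega
  have hk1 : k - 1 < k := by omega
  have hw_int : IntegrableOn
      (fun σ : Fin (k-1) → ℝ => ((∏ i, σ i) * (1 - ∑ i, σ i)) ^ (δ - 1))
      (Spx (k-1)) volume := integrableOn_w hδ
  refine ⟨?_, hw_int⟩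
  set A : ℝ := ∑ j, α j with hA
  have hA0 : 0 < A :=
    Finset.sum_pos (fun i _ => hα i) ⟨⟨0, by omega⟩, Finset.mem_univ _⟩
  have hB : 0 < 2 * A := by linarith
  have hχ_integrable : Integrable χ := hχ_cont.integrable_of_hasCompactSupport hχ_supp
  obtain ⟨M, hM⟩ : ∃ M : ℝ, tsupport χ ⊆ Set.Icc (-M) M := by
    obtain ⟨M, hM⟩ := (hχ_supp.isBounded).subset_closedBall 0
    refine ⟨M, ?_⟩
    intro x hx
    have := hM hx
    rw [Real.closedBall_eq_Icc] at this
    simpa using this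
  have hχ_zero : ∀ x, M < x → χ x = 0 := by
    intro x hx
    apply image_eq_zero_of_notMem_tsupport
    intro hmem
    have := (hM hmem).2
    linarith
  -- positivity of the coefficient
  have hC : ∀ {σ : Fin (k-1) → ℝ}, (∀ i, 0 < σ i) → ∑ i, σ i < 1 →
      0 < (∏ i, σ i ^ α (Fin.castLE (Nat.sub_le k 1) i)) *
        (1 - ∑ i, σ i) ^ α ⟨k - 1, hk1⟩ := by
    intro σ h0 h1
    exact mul_pos (Finset.prod_pos fun i _ => Real.rpow_pos_of_pos (h0 i) _)
      (Real.rpow_pos_of_pos (by linarith) _)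
  -- integral bounds for χ over half-lines
  have hIle : ∀ T : ℝ, (0 ≤ ∫ v in Set.Iio T, χ v) ∧ (∫ v in Set.Iio T, χ v) ≤ 1 := by
    intro T
    constructor
    · exact setIntegral_nonneg measurableSet_Iio fun x _ => hχ_nonneg x
    · rw [← hχ_int]
      exact setIntegral_le_integral hχ_integrable (Filter.Eventually.of_forall hχ_nonneg)
  -- a.e. interiority
  have hae : ∀ᵐ σ ∂(volume.restrict (Spx (k-1))),
      σ ∈ Spx (k-1) ∧ (∀ i, 0 < σ i) ∧ ∑ i, σ i < 1 := by
    have hbad : volume ((⋃ i, {σ : Fin (k-1) → ℝ | σ i = 0}) ∪ {σ | ∑ i, σ i = 1}) = 0 :=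
      measure_union_null (measure_iUnion_null fun i => null_coord i) (null_sum_one hd)
    have h1 : ∀ᵐ σ : Fin (k-1) → ℝ ∂volume,
        σ ∉ ((⋃ i, {σ : Fin (k-1) → ℝ | σ i = 0}) ∪ {σ | ∑ i, σ i = 1}) := by
      exact measure_eq_zero_iff_ae_notMem.mp hbad
    filter_upwards [ae_restrict_mem measurableSet_Spx, ae_restrict_of_ae h1] with σ hσ hnb
    refine ⟨hσ, ?_, ?_⟩
    · intro i
      rcases (hσ.1 i).lt_or_eq with h | h
      · exact h
      · exfalso
        apply hnb
        rw [Set.mem_union]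
        left
        rw [Set.mem_iUnion]
        exact ⟨i, h.symm⟩
    · rcases hσ.2.lt_or_eq with h | h
      · exact h
      · exfalso
        apply hnb
        rw [Set.mem_union]
        right
        exact h
  rw [← integral_const_mul]
  apply MeasureTheory.tendsto_integral_filter_of_dominated_convergence
    (bound := fun σ : Fin (k-1) → ℝ =>
      1 / (2 * A) * ((∏ i, σ i) * (1 - ∑ i, σ i)) ^ (δ - 1))
  -- measurability
  · filter_upwards with ε
    have hm : Measurable (fun p : (Fin (k-1) → ℝ) × ℝ =>
        χ (Real.log ((∏ i, p.1 i ^ α (Fin.castLE (Nat.sub_le k 1) i)) *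
          (1 - ∑ i, p.1 i) ^ α ⟨k - 1, hk1⟩ * p.2 ^ (2 * A) / ε)) / p.2) := by
      apply Measurable.div _ measurable_snd
      apply hχ_cont.measurable.comp
      apply Real.measurable_log.comp
      fun_prop
    have h1 : StronglyMeasurable fun σ : Fin (k-1) → ℝ =>
        ∫ r in Set.Ioo (0:ℝ) R,
          χ (Real.log ((∏ i, σ i ^ α (Fin.castLE (Nat.sub_le k 1) i)) *
            (1 - ∑ i, σ i) ^ α ⟨k - 1, hk1⟩ * r ^ (2 * A) / ε)) / r :=
      hm.stronglyMeasurable.integral_prod_right'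
    have h2 : StronglyMeasurable fun σ : Fin (k-1) → ℝ =>
        ((∏ i, σ i) * (1 - ∑ i, σ i)) ^ (δ - 1) := by
      apply Measurable.stronglyMeasurable
      fun_prop
    exact (h1.mul h2).aestronglyMeasurable
  -- bound
  · filter_upwards [self_mem_nhdsWithin] with ε hε
    rw [Set.mem_Ioi] at hε
    filter_upwards [hae] with σ hσ
    obtain ⟨hσS, hσ0, hσ1⟩ := hσ
    have hCσ := hC hσ0 hσ1
    rw [inner_eq hA0 hCσ hε hR χ]
    have hw0 : 0 ≤ ((∏ i, σ i) * (1 - ∑ i, σ i)) ^ (δ - 1) :=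
      Real.rpow_nonneg
        (mul_nonneg (Finset.prod_nonneg fun i _ => (hσ0 i).le) (by linarith)) _
    exact bound_step hB (hIle _).1 (hIle _).2 hw0
  -- bound integrable
  · exact hw_int.const_mul _
  -- pointwise limit
  · filter_upwards [hae] with σ hσ
    obtain ⟨hσS, hσ0, hσ1⟩ := hσ
    set Cσ : ℝ := (∏ i, σ i ^ α (Fin.castLE (Nat.sub_le k 1) i)) *
      (1 - ∑ i, σ i) ^ α ⟨k - 1, hk1⟩ with hCσdef
    have hCσ : 0 < Cσ := hC hσ0 hσ1
    apply Filter.Tendsto.congr' _ tendsto_const_nhds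
    have hev : Set.Ioo (0:ℝ) (Real.exp (Real.log (Cσ * R ^ (2*A)) - (M+1))) ∈ 𝓝[>] (0:ℝ) :=
      Ioo_mem_nhdsGT_of_mem ⟨le_refl 0, Real.exp_pos _⟩
    filter_upwards [hev] with ε hε
    rw [inner_eq hA0 hCσ hε.1 hR χ]
    have hT : M < Real.log (Cσ * R ^ (2*A) / ε) := by
      rw [Real.log_div (by positivity) (ne_of_gt hε.1)]
      have hlt : Real.log ε < Real.log (Cσ * R ^ (2*A)) - (M+1) := by
        have h2 := Real.log_lt_log hε.1 hε.2
        rwa [Real.log_exp] at h2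
      linarith
    have hfull : ∫ v in Set.Iio (Real.log (Cσ * R ^ (2*A) / ε)), χ v = 1 := by
      rw [setIntegral_eq_integral_of_forall_compl_eq_zero, hχ_int]
      intro x hx
      simp only [Set.mem_Iio, not_lt] at hx
      exact hχ_zero x (lt_of_lt_of_le hT hx)
    rw [hfull, mul_one]
end
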